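/- arXiv:0810.3154 — 2 statements merged into one kernel-verified Lean document; each statement's English description precedes it below -/
import Mathlib

section
/- Let f_0 : 𝔹^N → 𝔹^N be the vectorial negation, f_0(x_1,...,x_N) = (¬x_1,...,¬x_N). Then G_{f_0} is topologically transitive on (X, d): for any nonempty open sets U, V ⊆ X, there exists k > 0 with G_{f_0}^k(U) ∩ V ≠ ∅. -/
open Finset

/-- Distance between boolean states: number of differing cells. -/
def dE (N : ℕ) (E F : Fin N → Bool) : ℝ :=
  ∑ k : Fin N, if E k = F k then 0 else 1

/-- Distance between strategies. -/
noncomputable def dS (N : ℕ) (S T : ℕ → Fin N) : ℝ :=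
  (9 / N) * ∑' k : ℕ, |((S k : ℕ) : ℝ) - ((T k : ℕ) : ℝ)| / 10 ^ (k + 1)

/-- The distance on the phase space X = ⟦1;N⟧^ℕ × 𝔹^N. -/
noncomputable def dX (N : ℕ) (x y : (ℕ → Fin N) × (Fin N → Bool)) : ℝ :=
  dE N x.2 y.2 + dS N x.1 y.1

/-- F_f(k,E): update only coordinate k of E to f(E)_k. -/
def Ff (N : ℕ) (f : (Fin N → Bool) → Fin N → Bool) (k : Fin N) (E : Fin N → Bool) :
    Fin N → Bool :=
  Function.update E k (f E k)

/-- The map G_f(S,E) = (σ(S), F_f(S⁰,E)). -/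
def Gf (N : ℕ) (f : (Fin N → Bool) → Fin N → Bool)
    (x : (ℕ → Fin N) × (Fin N → Bool)) : (ℕ → Fin N) × (Fin N → Bool) :=
  (fun n => x.1 (n + 1), Ff N f (x.1 0) x.2)

/-- The vectorial negation f₀. -/
def f0 (N : ℕ) (E : Fin N → Bool) : Fin N → Bool := fun k => !E k

/-! Since `f₀` is the negation, updating cell `j` flips it, so any configuration can be
turned into any other by a finite list of updates: flip the cells where they differ.
Given `x ∈ U` and `y ∈ V`, start from `x`'s configuration with the strategy that first
repeats the first `m + 1` terms of `x`'s strategy (so the starting point is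
`10^-(m+1)`-close to `x`), then plays such a list leading to `y`'s configuration, and then
continues as `y`'s strategy: after that many steps `G_{f₀}` reaches `y`. -/

section Metric

variable {N : ℕ}

lemma dE_triangle (A B C : Fin N → Bool) : dE N A C ≤ dE N A B + dE N B C := by
  rw [dE, dE, dE, ← Finset.sum_add_distrib]
  refine Finset.sum_le_sum fun k _ => ?_
  cases A k <;> cases B k <;> cases C k <;> norm_num

lemma dS_term_le (S T : ℕ → Fin N) (k : ℕ) :
    |((S k : ℕ) : ℝ) - ((T k : ℕ) : ℝ)| / 10 ^ (k + 1) ≤ N * (1 / 10) ^ (k + 1) := by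
  rw [one_div_pow, mul_one_div]
  gcongr
  exact (abs_sub_lt_of_nonneg_of_lt (Nat.cast_nonneg _) (by exact_mod_cast (S k).2)
    (Nat.cast_nonneg _) (by exact_mod_cast (T k).2)).le

lemma summable_dS_term (S T : ℕ → Fin N) :
    Summable fun k => |((S k : ℕ) : ℝ) - ((T k : ℕ) : ℝ)| / 10 ^ (k + 1) := by
  refine .of_nonneg_of_le (fun k => by positivity) (dS_term_le S T) ?_
  exact (summable_nat_add_iff 1).mpr
    ((summable_geometric_of_lt_one (by norm_num) (by norm_num)).mul_left _)

lemma dS_triangle (A B C : ℕ → Fin N) : dS N A C ≤ dS N A B + dS N B C := by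
  rw [dS, dS, dS, ← mul_add, ← (summable_dS_term A B).tsum_add (summable_dS_term B C)]
  gcongr with k
  · exact summable_dS_term A C
  · exact (summable_dS_term A B).add (summable_dS_term B C)
  · rw [← add_div]
    gcongr
    exact abs_sub_le _ _ _

lemma dX_triangle (a b c : (ℕ → Fin N) × (Fin N → Bool)) :
    dX N a c ≤ dX N a b + dX N b c := by
  simp only [dX]
  linarith [dE_triangle a.2 b.2 c.2, dS_triangle a.1 b.1 c.1]

lemma dS_le_of_forall_lt_eq {m : ℕ} {S T : ℕ → Fin N} (h : ∀ n < m, S n = T n) :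
    dS N S T ≤ (1 / 10) ^ m := by
  have hN : (0 : ℝ) < N := by exact_mod_cast (S 0).pos
  set t := fun k => |((S k : ℕ) : ℝ) - ((T k : ℕ) : ℝ)| / 10 ^ (k + 1)
  have hhead : ∑ k ∈ Finset.range m, t k = 0 :=
    Finset.sum_eq_zero fun k hk => by simp [t, h k (Finset.mem_range.mp hk)]
  have hgeom : Summable fun i : ℕ => (N : ℝ) * (1 / 10) ^ (m + 1) * (1 / 10) ^ i :=
    (summable_geometric_of_lt_one (by norm_num) (by norm_num)).mul_left _
  have htail :
      ∑' i, t (i + m) ≤ ∑' i : ℕ, (N : ℝ) * (1 / 10) ^ (m + 1) * (1 / 10) ^ i := by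
    refine ((summable_nat_add_iff m).mpr (summable_dS_term S T)).tsum_le_tsum (fun i => ?_) hgeom
    calc t (i + m) ≤ N * (1 / 10) ^ (i + m + 1) := dS_term_le S T (i + m)
      _ = N * (1 / 10) ^ (m + 1) * (1 / 10) ^ i := by ring
  rw [tsum_mul_left, tsum_geometric_of_lt_one (by norm_num) (by norm_num)] at htail
  calc dS N S T = 9 / N * ∑' i, t (i + m) := by
        rw [dS, ← (summable_dS_term S T).sum_add_tsum_nat_add m, hhead, zero_add]
    _ ≤ 9 / N * (N * (1 / 10) ^ (m + 1) * (1 - 1 / 10)⁻¹) := by gcongr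
    _ = (1 / 10) ^ m := by field_simp; ring

end Metric

lemma exists_ball_subset_of_isOpen_generateFrom {X : Type*} {d : X → X → ℝ}
    (htri : ∀ a b c, d a c ≤ d a b + d b c) {U : Set X}
    (hU : @IsOpen _
      (TopologicalSpace.generateFrom {s | ∃ x ε, 0 < ε ∧ s = {y | d y x < ε}}) U)
    {x : X} (hx : x ∈ U) : ∃ ε > 0, {y | d y x < ε} ⊆ U := by
  induction hU generalizing x with
  | basic s hs =>
    obtain ⟨c, ε, -, rfl⟩ := hs
    exact ⟨ε - d x c, sub_pos.mpr hx, fun y (hy : d y x < ε - d x c) =>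
      show d y c < ε by linarith [htri y x c]⟩
  | univ => exact ⟨1, one_pos, Set.subset_univ _⟩
  | inter s t _ _ ihs iht =>
    obtain ⟨ε₁, hε₁, h₁⟩ := ihs hx.1
    obtain ⟨ε₂, hε₂, h₂⟩ := iht hx.2
    exact ⟨min ε₁ ε₂, lt_min hε₁ hε₂, fun y hy =>
      ⟨h₁ (hy.out.trans_le (min_le_left _ _)), h₂ (hy.out.trans_le (min_le_right _ _))⟩⟩
  | sUnion S _ ih =>
    obtain ⟨t, ht, hxt⟩ := hx
    obtain ⟨ε, hε, h⟩ := ih t ht hxt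
    exact ⟨ε, hε, h.trans (Set.subset_sUnion_of_mem ht)⟩

section Dynamics

variable {N : ℕ}

lemma Gf_iterate_append (f : (Fin N → Bool) → Fin N → Bool) (l : List (Fin N))
    (S : Stream' (Fin N)) (E : Fin N → Bool) :
    (Gf N f)^[l.length] (l ++ₛ S, E) = (S, l.foldl (fun E j => Ff N f j E) E) := by
  induction l generalizing E with
  | nil => rfl
  | cons j l ih => exact ih (Ff N f j E)

lemma Stream'.get_take_append {α : Type*} {m n : ℕ} (h : n < m) (s t : Stream' α) :
    (Stream'.take m s ++ₛ t).get n = s.get n :=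
  (Stream'.get_append_left _ _ _ (by rwa [Stream'.length_take])).trans (Stream'.take_get ..)

lemma foldl_Ff_f0_apply {l : List (Fin N)} (hl : l.Nodup) (E : Fin N → Bool) (i : Fin N) :
    l.foldl (fun E j => Ff N (f0 N) j E) E i = (E i ^^ decide (i ∈ l)) := by
  induction l generalizing E with
  | nil => simp
  | cons j l ih =>
    rw [List.foldl_cons, ih (List.nodup_cons.mp hl).2]
    by_cases hij : i = j
    · subst hij
      simp [Ff, f0, (List.nodup_cons.mp hl).1]
    · simp [Ff, f0, hij]

lemma exists_foldl_Ff_f0_eq (A B : Fin N → Bool) :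
    ∃ l : List (Fin N), l.foldl (fun E j => Ff N (f0 N) j E) A = B := by
  refine ⟨(List.finRange N).filter fun i => A i ≠ B i, funext fun i => ?_⟩
  rw [foldl_Ff_f0_apply ((List.nodup_finRange N).filter _)]
  simp only [List.mem_filter, List.mem_finRange, true_and]
  cases A i <;> cases B i <;> rfl

end Dynamics

theorem Gf0_transitive_general (N : ℕ) :
    ∀ U V : Set ((ℕ → Fin N) × (Fin N → Bool)),
      @IsOpen _ (TopologicalSpace.generateFrom
        {s | ∃ x ε, 0 < ε ∧ s = {y | dX N y x < ε}}) U →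
      @IsOpen _ (TopologicalSpace.generateFrom
        {s | ∃ x ε, 0 < ε ∧ s = {y | dX N y x < ε}}) V →
      U.Nonempty → V.Nonempty →
      ∃ k > 0, ((Gf N (f0 N))^[k] '' U ∩ V).Nonempty := by
  rintro U V hU - ⟨x, hxU⟩ ⟨y, hyV⟩
  obtain ⟨ε, hε, hball⟩ := exists_ball_subset_of_isOpen_generateFrom dX_triangle hU hxU
  obtain ⟨m, hm⟩ := exists_pow_lt_of_lt_one hε (by norm_num : (1 / 10 : ℝ) < 1)
  set p := Stream'.take (m + 1) x.1
  obtain ⟨l, hl⟩ := exists_foldl_Ff_f0_eq (p.foldl (fun E j => Ff N (f0 N) j E) x.2) y.2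
  set z : (ℕ → Fin N) × (Fin N → Bool) := (p ++ₛ (l ++ₛ y.1), x.2)
  have hzx : dX N z x < ε :=
    calc dX N z x = dS N z.1 x.1 := by simp [z, dX, dE]
      _ ≤ (1 / 10) ^ (m + 1) := dS_le_of_forall_lt_eq fun n hn => Stream'.get_take_append hn _ _
      _ < ε := lt_of_le_of_lt (pow_le_pow_of_le_one (by norm_num) (by norm_num) m.le_succ) hm
  have hzy : (Gf N (f0 N))^[l.length + p.length] z = y := by
    rw [Function.iterate_add_apply]
    exact (congrArg _ (Gf_iterate_append _ p _ _)).trans <|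
      (Gf_iterate_append _ l _ _).trans (congrArg _ hl)
  have hk : 0 < l.length + p.length := by
    have hp : p.length = m + 1 := Stream'.length_take _ _
    omega
  exact ⟨l.length + p.length, hk, y, ⟨z, hball hzx, hzy⟩, hyV⟩

/-- G_{f₀} is topologically transitive on (X,d). -/
theorem Gf0_transitive (N : ℕ) (hN : 1 ≤ N) :
    ∀ U V : Set ((ℕ → Fin N) × (Fin N → Bool)),
      @IsOpen _ (TopologicalSpace.generateFrom
        {s | ∃ x ε, 0 < ε ∧ s = {y | dX N y x < ε}}) U →
      @IsOpen _ (TopologicalSpace.generateFrom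
        {s | ∃ x ε, 0 < ε ∧ s = {y | dX N y x < ε}}) V →
      U.Nonempty → V.Nonempty →
      ∃ k > 0, ((Gf N (f0 N))^[k] '' U ∩ V).Nonempty :=
  Gf0_transitive_general N
end

section
/- With f_0 the vectorial negation on 𝔹^N, if the strategy S visits every coordinate 1,...,N during steps n, n+1, ..., n+m−1, and S' agrees with S except S' is modified so that at those steps each coordinate is visited an odd number of times for S' versus an even number for S (e.g., S'^{n+k−1} = k for k = 1,...,N and S agrees elsewhere), then the boolean components of G_{f_0}^{n+N}(S,E) and G_{f_0}^{n+N}(S',E) differ in every coordinate, so their distance is at least N. -/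
open Finset

/-
Under the vectorial negation, `G_{f₀}` flips coordinate `S k` of the state at step `k`, so after
`m` steps coordinate `j` has been negated once per visit of `j` in the first `m` steps: the state
is `E` xored with the parities of the visit counts. Before step `n` the strategies agree; inside
the window `S` visits each coordinate an even number of times and `S'` exactly once, so every
parity, hence every coordinate of the state, differs, and `dE` alone already contributes `N`.
-/

lemma Gf_iterate_fst (N : ℕ) (f : (Fin N → Bool) → Fin N → Bool) (m : ℕ)
    (x : (ℕ → Fin N) × (Fin N → Bool)) :
    ((Gf N f)^[m] x).1 = fun k => x.1 (k + m) := by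
  induction m generalizing x with
  | zero => rfl
  | succ m ih =>
    rw [Function.iterate_succ_apply]
    simp only [ih, Gf, Nat.add_assoc]

lemma Ff_f0_apply (N : ℕ) (k j : Fin N) (E : Fin N → Bool) :
    Ff N (f0 N) k E j = (E j ^^ decide (k = j)) := by
  by_cases h : k = j
  · subst h; simp [Ff, f0]
  · simp [Ff, Ne.symm h, h]

lemma Gf_f0_iterate_snd (N : ℕ) (S : ℕ → Fin N) (E : Fin N → Bool) (m : ℕ) (j : Fin N) :
    ((Gf N (f0 N))^[m] (S, E)).2 j = (E j ^^ decide (Odd #{k ∈ range m | S k = j})) := by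
  induction m with
  | zero => simp
  | succ m ih =>
    have hstep : ((Gf N (f0 N))^[m] (S, E)).1 0 = S m := by simp [Gf_iterate_fst]
    rw [Function.iterate_succ_apply']
    dsimp only [Gf]
    rw [Ff_f0_apply, hstep, ih, card_filter, card_filter, sum_range_succ, Bool.xor_assoc]
    by_cases h : S m = j
    · simp only [h, if_pos, decide_true, Nat.odd_add_one, decide_not, Bool.xor_true, Bool.xor_not]
    · simp only [h, if_neg, not_false_eq_true, decide_false, add_zero, Bool.xor_false]

lemma card_filter_range_add_card_filter_Ico {α : Type*} [DecidableEq α] (T : ℕ → α) (a : α)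
    {n l : ℕ} (hnl : n ≤ l) :
    #{k ∈ range n | T k = a} + #{k ∈ Ico n l | T k = a} = #{k ∈ range l | T k = a} := by
  simp only [card_filter]
  exact sum_range_add_sum_Ico _ hnl

lemma card_filter_range_congr {α : Type*} [DecidableEq α] {S S' : ℕ → α} {n : ℕ}
    (h : ∀ k < n, S' k = S k) (a : α) :
    #{k ∈ range n | S' k = a} = #{k ∈ range n | S k = a} :=
  congrArg card <| filter_congr fun k hk => by rw [h k (mem_range.mp hk)]

lemma card_filter_Ico_eq_one {N : ℕ} {S' : ℕ → Fin N} {n : ℕ}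
    (hmid : ∀ j : Fin N, S' (n + (j : ℕ)) = j) (j : Fin N) :
    #{k ∈ Ico n (n + N) | S' k = j} = 1 := by
  rw [card_eq_one]
  refine ⟨n + j, ?_⟩
  ext k
  simp only [mem_filter, mem_Ico, mem_singleton]
  constructor
  · rintro ⟨⟨hnk, hkN⟩, hk⟩
    have := hmid ⟨k - n, by omega⟩
    rw [show n + (k - n) = k by omega, hk] at this
    have := congrArg Fin.val this
    simp only at this
    omega
  · rintro rfl
    exact ⟨⟨Nat.le_add_right n j, by omega⟩, hmid j⟩

lemma dE_eq_of_forall_ne {N : ℕ} {E F : Fin N → Bool} (h : ∀ j, E j ≠ F j) :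
    dE N E F = N := by
  simp [dE, h]

lemma dS_nonneg (N : ℕ) (S T : ℕ → Fin N) : 0 ≤ dS N S T :=
  mul_nonneg (by positivity) (tsum_nonneg fun _ => by positivity)

lemma le_dX_of_forall_ne {N : ℕ} {x y : (ℕ → Fin N) × (Fin N → Bool)}
    (h : ∀ j, x.2 j ≠ y.2 j) : (N : ℝ) ≤ dX N x y := by
  rw [dX, dE_eq_of_forall_ne h]
  linarith [dS_nonneg N x.1 y.1]

theorem opposite_states_after_visits_general (N : ℕ)
    (S S' : ℕ → Fin N) (E : Fin N → Bool) (n : ℕ)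
    (hpre : ∀ k < n, S' k = S k)
    (hmid : ∀ j : Fin N, S' (n + (j : ℕ)) = j)
    (heven : ∀ j : Fin N, Even ((Finset.Ico n (n + N)).filter (fun k => S k = j)).card) :
    (∀ j : Fin N,
      ((Gf N (f0 N))^[n + N] (S, E)).2 j ≠ ((Gf N (f0 N))^[n + N] (S', E)).2 j) ∧
    (N : ℝ) ≤ dX N ((Gf N (f0 N))^[n + N] (S, E)) ((Gf N (f0 N))^[n + N] (S', E)) := by
  have hdiff : ∀ j : Fin N,
      ((Gf N (f0 N))^[n + N] (S, E)).2 j ≠ ((Gf N (f0 N))^[n + N] (S', E)).2 j := by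
    intro j
    have hsplit := fun T => card_filter_range_add_card_filter_Ico T j (Nat.le_add_right n N)
    rw [Gf_f0_iterate_snd, Gf_f0_iterate_snd, ← hsplit S, ← hsplit S',
      card_filter_range_congr hpre, card_filter_Ico_eq_one hmid]
    simp only [Nat.odd_add, heven j, iff_true, Nat.odd_add_one, decide_not, Bool.xor_not]
    exact Bool.not_ne_self _ |>.symm
  exact ⟨hdiff, le_dX_of_forall_ne hdiff⟩

/-- if S visits each coordinate an even number of times during steps
n,…,n+N−1 while S' (agreeing with S elsewhere) visits each coordinate exactly once
there, then after n+N iterations of G_{f₀} the boolean states differ in every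
coordinate, so the distance is at least N. -/
theorem opposite_states_after_visits (N : ℕ) (hN : 1 ≤ N)
    (S S' : ℕ → Fin N) (E : Fin N → Bool) (n : ℕ)
    (hpre : ∀ k < n, S' k = S k)
    (hpost : ∀ k, n + N ≤ k → S' k = S k)
    (hmid : ∀ j : Fin N, S' (n + (j : ℕ)) = j)
    (heven : ∀ j : Fin N, Even ((Finset.Ico n (n + N)).filter (fun k => S k = j)).card) :
    (∀ j : Fin N,
      ((Gf N (f0 N))^[n + N] (S, E)).2 j ≠ ((Gf N (f0 N))^[n + N] (S', E)).2 j) ∧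
    (N : ℝ) ≤ dX N ((Gf N (f0 N))^[n + N] (S, E)) ((Gf N (f0 N))^[n + N] (S', E)) :=
  opposite_states_after_visits_general N S S' E n hpre hmid heven
end
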